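/- Let κ be an infinite cardinal and assume Martin's Axiom MA(κ). Let 𝒜 be a family of subsets of ω, and suppose there is a sequence (A_θ)_{θ<κ} of subsets of ω such that every x ∈ 𝒜 is almost contained in a finite union of the A_θ, and for all finitely many θ₀,…,θ_{n−1} < κ the set ω \ (A_{θ₀} ∪ ⋯ ∪ A_{θ_{n−1}}) is infinite. Then there is an infinite z ⊆ ω such that x ∩ z is finite for all x ∈ 𝒜. -/

import Mathlib

/-- A filter on a partial order (in the forcing sense): nonempty, upward closed,
downward directed. -/
def IsPFilter {P : Type} [Preorder P] (G : Set P) : Prop :=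
  G.Nonempty ∧ (∀ p ∈ G, ∀ q, p ≤ q → q ∈ G) ∧
    ∀ p ∈ G, ∀ q ∈ G, ∃ t ∈ G, t ≤ p ∧ t ≤ q

/-- A dense subset of a partial order: every condition has an extension in it. -/
def IsDenseSub {P : Type} [Preorder P] (D : Set P) : Prop :=
  ∀ p : P, ∃ q ≤ p, q ∈ D

/-- The countable chain condition: every antichain (set of pairwise incompatible
conditions) is countable. -/
def IsCCC (P : Type) [Preorder P] : Prop :=
  ∀ A : Set P, A.Pairwise (fun p q => ¬ ∃ t, t ≤ p ∧ t ≤ q) → A.Countable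

/-- Martin's Axiom `MA(κ)`: for every ccc partial order and every family of at most
`κ` many dense sets, there is a filter meeting them all. -/
def MartinsAxiom (κ : Cardinal.{0}) : Prop :=
  ∀ (P : Type) [Preorder P], IsCCC P →
    ∀ 𝒟 : Set (Set P), Cardinal.mk ↥𝒟 ≤ κ → (∀ D ∈ 𝒟, IsDenseSub D) →
      ∃ G : Set P, IsPFilter G ∧ ∀ D ∈ 𝒟, (G ∩ D).Nonempty

/-!
Almost-disjoint forcing builds `z` from finite stems, under the promise that once `A θ` enters
the side condition no further element of `A θ` is added. Conditions with equal stems are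
compatible, so the forcing is ccc. A filter meeting the `ℵ₀ + κ = κ` dense sets that make the
stems unbounded and put each `θ` into a side yields an infinite `z` with every `z ∩ A θ` finite;
since `x ⊆* A θ₀ ∪ ⋯ ∪ A θₙ` for `x ∈ 𝒜`, also `x ∩ z` is finite.
-/

theorem MartinsAxiom.exists_filter_forall_nonempty {κ : Cardinal.{0}} (hMA : MartinsAxiom κ)
    {P : Type} [Preorder P] (hP : IsCCC P) {J : Type} (hJ : Cardinal.mk J ≤ κ)
    (D : J → Set P) (hD : ∀ j, IsDenseSub (D j)) :
    ∃ G : Set P, IsPFilter G ∧ ∀ j, (G ∩ D j).Nonempty := by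
  obtain ⟨G, hG, hmeet⟩ := hMA P hP (Set.range D) (Cardinal.mk_range_le.trans hJ)
    (by rintro _ ⟨j, rfl⟩; exact hD j)
  exact ⟨G, hG, fun j => hmeet _ ⟨j, rfl⟩⟩

theorem Set.Finite.inter_of_diff_biUnion {α ι : Type*} {x z : Set α} {A : ι → Set α}
    (F : Finset ι) (hx : (x \ ⋃ θ ∈ F, A θ).Finite) (hz : ∀ θ ∈ F, (z ∩ A θ).Finite) :
    (x ∩ z).Finite := by
  refine (hx.union (F.finite_toSet.biUnion hz)).subset ?_
  rintro m ⟨hmx, hmz⟩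
  by_cases hm : m ∈ ⋃ θ ∈ F, A θ
  · simp only [Set.mem_iUnion] at hm
    obtain ⟨θ, hθ, hmA⟩ := hm
    exact Or.inr (Set.mem_biUnion hθ ⟨hmz, hmA⟩)
  · exact Or.inl ⟨hmx, hm⟩

/-- Almost-disjoint forcing for the family `A`: the paper's binary sequence `s` is encoded by
the finite set `stem` it codes, and `ℱ` by a finite set `side` of indices. -/
structure ADCondition {ι : Type} (A : ι → Set ℕ) where
  stem : Finset ℕ
  side : Finset ι

namespace ADCondition

variable {ι : Type} {A : ι → Set ℕ}

instance : Preorder (ADCondition A) where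
  le p q := q.stem ⊆ p.stem ∧ q.side ⊆ p.side ∧ ∀ m ∈ p.stem \ q.stem, ∀ θ ∈ q.side, m ∉ A θ
  le_refl p := ⟨subset_rfl, subset_rfl, by simp⟩
  le_trans := by
    rintro p q r ⟨hqp, hqp', hq⟩ ⟨hrq, hrq', hr⟩
    refine ⟨hrq.trans hqp, hrq'.trans hqp', fun m hm θ hθ => ?_⟩
    obtain ⟨hmp, hmr⟩ := Finset.mem_sdiff.mp hm
    by_cases hmq : m ∈ q.stem
    · exact hr m (Finset.mem_sdiff.mpr ⟨hmq, hmr⟩) θ hθ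
    · exact hq m (Finset.mem_sdiff.mpr ⟨hmp, hmq⟩) θ (hrq' hθ)

theorem le_def {p q : ADCondition A} :
    p ≤ q ↔ q.stem ⊆ p.stem ∧ q.side ⊆ p.side ∧
      ∀ m ∈ p.stem \ q.stem, ∀ θ ∈ q.side, m ∉ A θ :=
  Iff.rfl

theorem exists_le_of_stem_eq {p q : ADCondition A} (h : p.stem = q.stem) :
    ∃ t, t ≤ p ∧ t ≤ q := by
  classical
  exact ⟨⟨p.stem, p.side ∪ q.side⟩, ⟨subset_rfl, Finset.subset_union_left, by simp⟩,
    ⟨h.ge, Finset.subset_union_right, by simp [h]⟩⟩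

theorem isCCC : IsCCC (ADCondition A) := by
  intro S hS
  have hinj : Set.InjOn stem S := fun p hp q hq hpq =>
    by_contra fun hne => hS hp hq hne (exists_le_of_stem_eq hpq)
  exact Set.countable_of_injective_of_countable_image hinj (Set.to_countable _)

theorem isDenseSub_exists_ge (hA : ∀ F : Finset ι, ((⋃ θ ∈ F, A θ)ᶜ : Set ℕ).Infinite) (n : ℕ) :
    IsDenseSub {p : ADCondition A | ∃ m ∈ p.stem, n ≤ m} := by
  classical
  intro p
  obtain ⟨m, hm, hnm⟩ := (hA p.side).exists_gt n
  refine ⟨⟨insert m p.stem, p.side⟩, le_def.mpr ⟨Finset.subset_insert _ _, subset_rfl, ?_⟩,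
    m, Finset.mem_insert_self _ _, hnm.le⟩
  intro m' hm' θ hθ hm'A
  obtain ⟨hm'm, hm'p⟩ := Finset.mem_sdiff.mp hm'
  obtain rfl | hm'p' := Finset.mem_insert.mp hm'm
  · exact hm (Set.mem_biUnion hθ hm'A)
  · exact hm'p hm'p'

theorem isDenseSub_mem_side (θ : ι) : IsDenseSub {p : ADCondition A | θ ∈ p.side} := by
  classical
  exact fun p => ⟨⟨p.stem, insert θ p.side⟩, ⟨subset_rfl, Finset.subset_insert _ _, by simp⟩,
    Finset.mem_insert_self _ _⟩

def generic (G : Set (ADCondition A)) : Set ℕ :=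
  ⋃ p ∈ G, (p.stem : Set ℕ)

variable {G : Set (ADCondition A)}

theorem generic_infinite (hG : ∀ n, (G ∩ {p | ∃ m ∈ p.stem, n ≤ m}).Nonempty) :
    (generic G).Infinite := by
  refine Set.infinite_of_forall_exists_gt fun n => ?_
  obtain ⟨p, hpG, m, hm, hnm⟩ := hG (n + 1)
  exact ⟨m, Set.mem_biUnion hpG hm, hnm⟩

/-- Every condition of `G` is compatible with `p`, and `p` forbids adding elements of `A θ`. -/
theorem generic_inter_subset (hG : IsPFilter G) {p : ADCondition A} (hp : p ∈ G) {θ : ι}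
    (hθ : θ ∈ p.side) : generic G ∩ A θ ⊆ p.stem := by
  rintro m ⟨hm, hmA⟩
  obtain ⟨q, hq, hmq⟩ := Set.mem_iUnion₂.mp hm
  obtain ⟨t, -, htp, htq⟩ := hG.2.2 p hp q hq
  by_contra hmp
  exact (le_def.mp htp).2.2 m (Finset.mem_sdiff.mpr ⟨(le_def.mp htq).1 hmq, hmp⟩) θ hθ hmA

theorem generic_inter_finite (hG : IsPFilter G) {θ : ι} (hθ : (G ∩ {p | θ ∈ p.side}).Nonempty) :
    (generic G ∩ A θ).Finite :=
  let ⟨p, hp, hθp⟩ := hθ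
  p.stem.finite_toSet.subset (generic_inter_subset hG hp hθp)

end ADCondition

open ADCondition in
theorem ma_easy_lemma (κ : Cardinal.{0}) (hκ : Cardinal.aleph0 ≤ κ)
    (hMA : MartinsAxiom κ)
    (ι : Type) (hι : Cardinal.mk ι = κ)
    (𝒜 : Set (Set ℕ)) (A : ι → Set ℕ)
    (h1 : ∀ x ∈ 𝒜, ∃ F : Finset ι, (x \ ⋃ θ ∈ F, A θ).Finite)
    (h2 : ∀ F : Finset ι, ((⋃ θ ∈ F, A θ)ᶜ : Set ℕ).Infinite) :
    ∃ z : Set ℕ, z.Infinite ∧ ∀ x ∈ 𝒜, (x ∩ z).Finite := by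
  have hcard : Cardinal.mk (ℕ ⊕ ι) ≤ κ := by
    rw [Cardinal.mk_sum, Cardinal.mk_nat, hι, Cardinal.lift_aleph0, Cardinal.lift_id,
      Cardinal.add_eq_right hκ hκ]
  obtain ⟨G, hG, hmeet⟩ := hMA.exists_filter_forall_nonempty (isCCC (A := A)) hcard
    (Sum.elim (fun n => {p | ∃ m ∈ p.stem, n ≤ m}) fun θ => {p | θ ∈ p.side})
    (by rintro (n | θ); exacts [isDenseSub_exists_ge h2 n, isDenseSub_mem_side θ])
  refine ⟨generic G, generic_infinite fun n => hmeet (.inl n), fun x hx => ?_⟩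
  obtain ⟨F, hF⟩ := h1 x hx
  exact hF.inter_of_diff_biUnion F fun θ _ => generic_inter_finite hG (hmeet (.inr θ))
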